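/- arXiv:1901.01145 — 2 statements merged into one kernel-verified Lean document; each statement's English description precedes it below -/
import Mathlib

section
/- Let X ⊆ Λ^G be a nonempty closed shift-invariant subset with the gluing property witnessed by a finite set D containing the identity. Then for any pairwise disjoint finite sets T₁,…,T_n ⊆ G with DT_i ∩ T_j = ∅ for all i ≠ j, and any blocks B_i : T_i → Λ each occurring in X, there exists x ∈ X with x|_{T_i} = B_i for all i. -/
open scoped Pointwise

/-- A block `B : T → Λ` occurs in `X ⊆ Λ^G`. -/
def occursIn {G Λ : Type*} (X : Set (G → Λ)) (T : Finset G) (B : ↥T → Λ) : Prop :=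
  ∃ x ∈ X, ∀ t : ↥T, x t = B t

theorem stmt6 {G Λ : Type*} [Group G] [Countable G] [DecidableEq G] [Fintype Λ]
    [TopologicalSpace Λ] [DiscreteTopology Λ]
    (X : Set (G → Λ)) (hXne : X.Nonempty) (hXcl : IsClosed X)
    (hXinv : ∀ (g : G), ∀ x ∈ X, (fun h => x (h * g)) ∈ X)
    (D : Finset G) (hD : (1 : G) ∈ D)
    (hglue : ∀ (T₁ T₂ : Finset G), Disjoint T₂ (D * T₁) →
      ∀ (A : ↥T₁ → Λ) (B : ↥T₂ → Λ),
        occursIn X T₁ A → occursIn X T₂ B →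
        ∃ x ∈ X, (∀ t : ↥T₁, x t = A t) ∧ (∀ t : ↥T₂, x t = B t))
    (n : ℕ) (T : Fin n → Finset G)
    (hdisj : ∀ i j, i ≠ j → Disjoint (D * T i) (T j))
    (B : ∀ i, ↥(T i) → Λ) (hB : ∀ i, occursIn X (T i) (B i)) :
    ∃ x ∈ X, ∀ i, ∀ t : ↥(T i), x t = B i t := by
  induction n with
  | zero =>
    obtain ⟨x, hx⟩ := hXne
    exact ⟨x, hx, fun i => i.elim0⟩
  | succ n ih =>
    obtain ⟨x, hxX, hx⟩ := ih (fun i => T i.castSucc)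
      (fun i j hij => hdisj _ _ (by simpa using hij))
      (fun i => B i.castSucc) (fun i => hB i.castSucc)
    set S : Finset G := Finset.univ.biUnion (fun i : Fin n => T i.castSucc) with hS
    have hdis : Disjoint (T (Fin.last n)) (D * S) := by
      rw [Finset.disjoint_right]
      intro g hg hgT
      rw [Finset.mem_mul] at hg
      obtain ⟨d, hd, s, hs, rfl⟩ := hg
      rw [Finset.mem_biUnion] at hs
      obtain ⟨i, -, hs⟩ := hs
      have : d * s ∈ D * T i.castSucc := Finset.mul_mem_mul hd hs
      exact (Finset.disjoint_left.mp (hdisj i.castSucc (Fin.last n)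
        (Fin.castSucc_lt_last i).ne) this) hgT
    have hoccS : occursIn X S (fun t => x t) := ⟨x, hxX, fun t => rfl⟩
    obtain ⟨y, hyX, hy1, hy2⟩ := hglue S (T (Fin.last n)) hdis _ _ hoccS (hB (Fin.last n))
    refine ⟨y, hyX, fun i => ?_⟩
    refine Fin.lastCases ?_ ?_ i
    · exact hy2
    · intro j t
      have htS : (t : G) ∈ S := Finset.mem_biUnion.mpr ⟨j, Finset.mem_univ _, t.2⟩
      have := hy1 ⟨t, htS⟩
      simp only at this
      rw [this]
      exact hx j t
end

section
/- Let G be a countable amenable group and X a subshift over a finite alphabet with |alphabet| = l, with h(X) > log k for an integer k ≥ 2, and suppose X has the gluing property with gluing distance D. Suppose moreover there exists a tiling T₀ of G with shapes S satisfying |S \ S_D| < ((γ−1) log_l k)|S| and N_S(X) > k^{γ|S|} for some fixed 1 < γ < h(X)/log k, such that the orbit-closure subshift X_{T₀} has entropy zero. Then the product subshift X̃ = X × X_{T₀} has h(X̃) = h(X) and admits a continuous shift-commuting surjection onto the full shift {1,…,k}^G. -/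
/-!
Entropy is additive on products and `Y` has entropy zero, so only the factor map needs work.
By the shape conditions, every tile shape `S j` carries more occurring blocks on its `D`-core
than there are words `k ^ |S j|`, so some `Ψ j` maps core blocks onto all words on `S j`.
Every point of the orbit closure `Y` still encodes a tiling, because being a tile center is
decided on a finite window; the factor map reads the tiling off the second coordinate and
writes `Ψ j` of the core block on each tile, a sliding block code. For surjectivity, cores of
distinct tiles are `D`-separated, so gluing realises prescribed core blocks on finitely many
tiles, and compactness of `X` on all of them at once.
-/

open scoped Pointwise symmDiff

/-- The number of blocks with domain `T` occurring in `X ⊆ Λ^G`. -/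
noncomputable def blockCount {G Λ : Type*} (X : Set (G → Λ)) (T : Finset G) : ℕ :=
  Nat.card ((fun x : G → Λ => fun t : ↥T => x t) '' X)

/-- A tiling of a group `G` with shapes `S 0, …, S (k₀-1)`. -/
structure Tiling (G : Type*) [Group G] [DecidableEq G] (k₀ : ℕ) (S : Fin k₀ → Finset G) where
  tiles : Set (Finset G)
  pairwise_disjoint : ∀ T₁ ∈ tiles, ∀ T₂ ∈ tiles, T₁ ≠ T₂ → Disjoint T₁ T₂
  covers : ∀ g : G, ∃ T ∈ tiles, g ∈ T
  shape : ∀ T ∈ tiles, ∃! p : Fin k₀ × G, T = (S p.1).image (fun s => s * p.2)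

/-- The `D`-core of a finite set `T`: `{t ∈ T : D t ⊆ T}`. -/
def core {G : Type*} [Group G] [DecidableEq G] (D T : Finset G) : Finset G :=
  T.filter (fun t => ∀ d ∈ D, d * t ∈ T)

/-- `x` is the symbolic point induced by the tiling `𝒯`. -/
def encodes {G : Type*} [Group G] [DecidableEq G] {k₀ : ℕ} {S : Fin k₀ → Finset G}
    (𝒯 : Tiling G k₀ S) (x : G → Fin (k₀+1)) : Prop :=
  ∀ g : G, ∀ j : Fin k₀, x g = j.succ ↔ (S j).image (fun s => s * g) ∈ 𝒯.tiles

open Finset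

section Blocks

variable {G Λ : Type*}

def blocks (X : Set (G → Λ)) (T : Finset G) : Set (T → Λ) :=
  (fun x : G → Λ => fun t : T => x t) '' X

theorem blockCount_eq_card_blocks (X : Set (G → Λ)) (T : Finset G) :
    blockCount X T = Nat.card (blocks X T) :=
  rfl

theorem blockCount_pos [Finite Λ] {X : Set (G → Λ)} (hX : X.Nonempty) (T : Finset G) :
    0 < blockCount X T :=
  have := (hX.image fun x : G → Λ => fun t : T => x t).to_subtype
  Nat.card_pos

theorem blockCount_le_mul_card_pow_sdiff [Fintype Λ] [DecidableEq G] (X : Set (G → Λ))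
    {C T : Finset G} (hCT : C ⊆ T) :
    blockCount X T ≤ blockCount X C * Fintype.card Λ ^ (T \ C).card := by
  have hmaps : ∀ B ∈ blocks X T, (fun t : C => B ⟨t, hCT t.2⟩) ∈ blocks X C := by
    rintro _ ⟨x, hx, rfl⟩
    exact ⟨x, hx, rfl⟩
  let f : blocks X T → blocks X C × (↥(T \ C) → Λ) := fun B =>
    (⟨_, hmaps B B.2⟩, fun t => B.1 ⟨t, sdiff_subset t.2⟩)
  have hf : f.Injective := by
    intro B B' h
    simp only [f, Prod.mk.injEq, Subtype.mk.injEq, funext_iff] at h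
    ext ⟨t, ht⟩
    by_cases htC : t ∈ C
    · exact h.1 ⟨t, htC⟩
    · exact h.2 ⟨t, mem_sdiff.2 ⟨ht, htC⟩⟩
  calc blockCount X T ≤ Nat.card (blocks X C × (↥(T \ C) → Λ)) :=
        Nat.card_le_card_of_injective f hf
    _ = blockCount X C * Fintype.card Λ ^ (T \ C).card := by
        rw [Nat.card_prod, Nat.card_fun, Nat.card_eq_fintype_card (α := Λ),
          Nat.card_eq_finsetCard]
        rfl

theorem blockCount_prod {K : Type*} (X : Set (G → Λ)) (Y : Set (G → K)) (T : Finset G) :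
    blockCount {z : G → Λ × K | (fun g => (z g).1) ∈ X ∧ (fun g => (z g).2) ∈ Y} T
      = blockCount X T * blockCount Y T := by
  let e := Equiv.arrowProdEquivProdArrow T (fun _ => Λ) (fun _ => K)
  have himage : e '' blocks {z : G → Λ × K | (fun g => (z g).1) ∈ X ∧ (fun g => (z g).2) ∈ Y} T
      = blocks X T ×ˢ blocks Y T := by
    ext q
    constructor
    · rintro ⟨B, ⟨z, hz, rfl⟩, rfl⟩
      exact ⟨⟨_, hz.1, rfl⟩, ⟨_, hz.2, rfl⟩⟩
    · rintro ⟨⟨x, hx, hxq⟩, ⟨y, hy, hyq⟩⟩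
      exact ⟨_, ⟨fun g => (x g, y g), ⟨hx, hy⟩, rfl⟩, Prod.ext hxq hyq⟩
  rw [blockCount_eq_card_blocks, ← Nat.card_image_of_injective e.injective, himage,
    Nat.card_congr (Equiv.Set.prod _ _), Nat.card_prod]
  rfl

theorem tendsto_log_blockCount_prod [Finite Λ] {K : Type*} [Finite K] {ι : Type*}
    {L : Filter ι} {F : ι → Finset G} {X : Set (G → Λ)} {Y : Set (G → K)}
    (hXne : X.Nonempty) (hYne : Y.Nonempty) {a b : ℝ}
    (hX : Filter.Tendsto (fun i => Real.log (blockCount X (F i)) / (F i).card) L (nhds a))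
    (hY : Filter.Tendsto (fun i => Real.log (blockCount Y (F i)) / (F i).card) L (nhds b)) :
    Filter.Tendsto (fun i => Real.log (blockCount
        {z : G → Λ × K | (fun g => (z g).1) ∈ X ∧ (fun g => (z g).2) ∈ Y} (F i)) / (F i).card)
      L (nhds (a + b)) := by
  refine (hX.add hY).congr fun i => ?_
  rw [← add_div, blockCount_prod, Nat.cast_mul,
    Real.log_mul (by exact_mod_cast (blockCount_pos hXne _).ne')
      (by exact_mod_cast (blockCount_pos hYne _).ne')]

/-- Each block on `C` extends to at most `card Λ ^ |T \ C| ≤ k ^ ((γ - 1) |T|)` blocks on `T`. -/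
theorem pow_card_lt_blockCount_of_subset [Fintype Λ] [DecidableEq G] (X : Set (G → Λ))
    {C T : Finset G} (hCT : C ⊆ T) {k : ℕ} (hk : 0 < k) {γ : ℝ}
    (hsdiff : ((T \ C).card : ℝ) < ((γ - 1) * Real.logb (Fintype.card Λ) k) * T.card)
    (hT : (k : ℝ) ^ (γ * T.card) < blockCount X T) :
    k ^ T.card < blockCount X C := by
  -- `logb` to the base `0` or `1` is `0`, so `hsdiff` rules out `card Λ ≤ 1`.
  have hl : (1 : ℝ) < Fintype.card Λ := by
    by_contra! hl
    have hlogb : Real.logb (Fintype.card Λ) k = 0 := by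
      rcases Nat.le_one_iff_eq_zero_or_eq_one.1 (by exact_mod_cast hl) with h | h <;>
        simp [h]
    rw [hlogb, mul_zero, zero_mul] at hsdiff
    exact (Nat.cast_nonneg _).not_gt hsdiff
  have hkR : (0 : ℝ) < k := by exact_mod_cast hk
  have hsdiff_pow : ((Fintype.card Λ : ℕ) : ℝ) ^ (T \ C).card ≤ (k : ℝ) ^ ((γ - 1) * T.card) :=
    calc ((Fintype.card Λ : ℕ) : ℝ) ^ (T \ C).card
        = ((Fintype.card Λ : ℕ) : ℝ) ^ ((T \ C).card : ℝ) := (Real.rpow_natCast _ _).symm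
      _ ≤ ((Fintype.card Λ : ℕ) : ℝ) ^ (((γ - 1) * Real.logb (Fintype.card Λ) k) * T.card) :=
          Real.rpow_le_rpow_of_exponent_le hl.le hsdiff.le
      _ = (k : ℝ) ^ ((γ - 1) * T.card) := by
          rw [mul_comm (γ - 1), mul_assoc, Real.rpow_mul (by positivity),
            Real.rpow_logb (by positivity) hl.ne' hkR]
  have hsplit : (k : ℝ) ^ (γ * T.card) = (k : ℝ) ^ T.card * (k : ℝ) ^ ((γ - 1) * T.card) := by
    rw [← Real.rpow_natCast, ← Real.rpow_add hkR]
    ring_nf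
  have hmul : (k : ℝ) ^ T.card * (k : ℝ) ^ ((γ - 1) * T.card)
      < blockCount X C * (k : ℝ) ^ ((γ - 1) * T.card) :=
    calc _ = (k : ℝ) ^ (γ * T.card) := hsplit.symm
      _ < blockCount X T := hT
      _ ≤ blockCount X C * ((Fintype.card Λ : ℕ) : ℝ) ^ (T \ C).card := by
          exact_mod_cast blockCount_le_mul_card_pow_sdiff X hCT
      _ ≤ _ := by gcongr
  exact_mod_cast lt_of_mul_lt_mul_right hmul (by positivity)

end Blocks

theorem exists_surjOn_univ_of_card_le {α β : Type*} [Finite β] [Nonempty β] {A : Set α}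
    [Finite A] (h : Nat.card β ≤ Nat.card A) : ∃ f : α → β, Set.SurjOn f A Set.univ := by
  classical
  have := Fintype.ofFinite β
  have := Fintype.ofFinite A
  rw [Nat.card_eq_fintype_card, Nat.card_eq_fintype_card] at h
  obtain ⟨ι⟩ := Function.Embedding.nonempty_of_card_le h
  have hinj : Function.Injective fun b => (ι b : α) := Subtype.val_injective.comp ι.injective
  exact ⟨Function.invFun fun b => (ι b : α),
    fun b _ => ⟨ι b, (ι b).2, Function.leftInverse_invFun hinj b⟩⟩

section DiscretePi

variable {G A : Type*} [TopologicalSpace A] [DiscreteTopology A]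

theorem setOf_forall_mem_finset_eq_mem_nhds (z₀ : G → A) (E : Finset G) :
    {z : G → A | ∀ u ∈ E, z u = z₀ u} ∈ nhds z₀ :=
  set_pi_mem_nhds E.finite_toSet fun u _ => (isOpen_discrete {z₀ u}).mem_nhds rfl

theorem exists_mem_forall_mem_finset_eq_of_mem_closure {O : Set (G → A)} {y : G → A}
    (hy : y ∈ closure O) (E : Finset G) : ∃ o ∈ O, ∀ u ∈ E, o u = y u := by
  obtain ⟨o, ho, hoO⟩ := mem_closure_iff_nhds.1 hy _ (setOf_forall_mem_finset_eq_mem_nhds y E)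
  exact ⟨o, hoO, ho⟩

theorem continuousOn_of_forall_mem_finset_eq {B : Type*} [TopologicalSpace B]
    {f : (G → A) → B} {s : Set (G → A)} (E : Finset G)
    (hf : ∀ z ∈ s, ∀ z' ∈ s, (∀ u ∈ E, z u = z' u) → f z = f z') : ContinuousOn f s := by
  intro z₀ hz₀
  refine tendsto_const_nhds.congr' ?_
  filter_upwards [nhdsWithin_le_nhds (setOf_forall_mem_finset_eq_mem_nhds z₀ E),
    self_mem_nhdsWithin] with z hzE hz
  exact hf z₀ hz₀ z hz fun u hu => (hzE u hu).symm

end DiscretePi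

section Centers

variable {G : Type*} [Group G] {k₀ : ℕ} (S : Fin k₀ → Finset G)

/-- The tile `(S j) c` is announced in `y` by the symbol `j.succ` at `c`. -/
def IsCenter (y : G → Fin (k₀ + 1)) (g : G) (p : Fin k₀ × G) : Prop :=
  y p.2 = p.1.succ ∧ g * p.2⁻¹ ∈ S p.1

def HasUniqueCenters (y : G → Fin (k₀ + 1)) : Prop :=
  ∀ g, ∃! p, IsCenter S y g p

def centerCandidates [DecidableEq G] (g : G) : Finset G :=
  univ.biUnion fun j => (S j).image fun s => s⁻¹ * g

variable {S}

theorem isCenter_shift_iff {y : G → Fin (k₀ + 1)} {g g₀ : G} {p : Fin k₀ × G} :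
    IsCenter S (fun u => y (u * g₀)) g p ↔ IsCenter S y (g * g₀) (p.1, p.2 * g₀) := by
  simp [IsCenter, mul_assoc]

theorem HasUniqueCenters.shift {y : G → Fin (k₀ + 1)} (hy : HasUniqueCenters S y) (g₀ : G) :
    HasUniqueCenters S fun u => y (u * g₀) := by
  intro g
  obtain ⟨p, hp, huniq⟩ := hy (g * g₀)
  refine ⟨(p.1, p.2 * g₀⁻¹), isCenter_shift_iff.2 (by simpa using hp), fun q hq => ?_⟩
  obtain rfl := huniq _ (isCenter_shift_iff.1 hq)
  simp

variable [DecidableEq G]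

theorem mem_image_mul_right_iff {T : Finset G} {g c : G} :
    g ∈ T.image (fun s => s * c) ↔ g * c⁻¹ ∈ T := by
  simp

theorem IsCenter.mem_centerCandidates {y : G → Fin (k₀ + 1)} {g : G} {p : Fin k₀ × G}
    (hp : IsCenter S y g p) : p.2 ∈ centerCandidates S g :=
  mem_biUnion.2 ⟨p.1, mem_univ _, mem_image.2 ⟨g * p.2⁻¹, hp.2, by group⟩⟩

theorem isCenter_congr {y y' : G → Fin (k₀ + 1)} {g : G}
    (h : ∀ c ∈ centerCandidates S g, y c = y' c) {p : Fin k₀ × G} :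
    IsCenter S y g p ↔ IsCenter S y' g p :=
  ⟨fun hp => ⟨(h _ hp.mem_centerCandidates).symm.trans hp.1, hp.2⟩,
    fun hp => ⟨(h _ hp.mem_centerCandidates).trans hp.1, hp.2⟩⟩

theorem HasUniqueCenters.of_mem_closure_orbit {x y : G → Fin (k₀ + 1)}
    (hx : HasUniqueCenters S x) (hy : y ∈ closure {y | ∃ g : G, y = fun h => x (h * g)}) :
    HasUniqueCenters S y := by
  intro g
  obtain ⟨_, ⟨g₀, rfl⟩, hagree⟩ :=
    exists_mem_forall_mem_finset_eq_of_mem_closure hy (centerCandidates S g)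
  exact (existsUnique_congr fun p => isCenter_congr hagree).1 (hx.shift g₀ g)

namespace Tiling

variable (𝒯 : Tiling G k₀ S)

theorem eq_of_mem_of_mem {T₁ T₂ : Finset G} (h₁ : T₁ ∈ 𝒯.tiles) (h₂ : T₂ ∈ 𝒯.tiles) {g : G}
    (hg₁ : g ∈ T₁) (hg₂ : g ∈ T₂) : T₁ = T₂ := by
  by_contra hne
  exact disjoint_left.1 (𝒯.pairwise_disjoint _ h₁ _ h₂ hne) hg₁ hg₂

theorem eq_of_image_eq {p q : Fin k₀ × G} (hp : (S p.1).image (fun s => s * p.2) ∈ 𝒯.tiles)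
    (h : (S p.1).image (fun s => s * p.2) = (S q.1).image (fun s => s * q.2)) : p = q :=
  (𝒯.shape _ hp).unique rfl h

theorem disjoint_of_ne {p q : Fin k₀ × G} (hp : (S p.1).image (fun s => s * p.2) ∈ 𝒯.tiles)
    (hq : (S q.1).image (fun s => s * q.2) ∈ 𝒯.tiles) (hne : p ≠ q) :
    Disjoint ((S p.1).image fun s => s * p.2) ((S q.1).image fun s => s * q.2) :=
  𝒯.pairwise_disjoint _ hp _ hq fun h => hne (𝒯.eq_of_image_eq hp h)

theorem hasUniqueCenters {x : G → Fin (k₀ + 1)} (hx : encodes 𝒯 x) : HasUniqueCenters S x := by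
  intro g
  obtain ⟨T, hT, hgT⟩ := 𝒯.covers g
  obtain ⟨p, rfl, -⟩ := 𝒯.shape T hT
  refine ⟨p, ⟨(hx p.2 p.1).2 hT, mem_image_mul_right_iff.1 hgT⟩, fun q hq => ?_⟩
  have hqT := (hx q.2 q.1).1 hq.1
  exact 𝒯.eq_of_image_eq hqT (𝒯.eq_of_mem_of_mem hqT hT (mem_image_mul_right_iff.2 hq.2) hgT)

end Tiling

end Centers

section TileCode

variable {G Λ : Type*} [Group G] {k₀ k : ℕ} (S C : Fin k₀ → Finset G)

def tileWindow [DecidableEq G] (g : G) : Finset G :=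
  centerCandidates S g ∪
    (centerCandidates S g).biUnion fun c => univ.biUnion fun j => (C j).image fun t => t * c

variable [NeZero k] (Ψ : ∀ j, (C j → Λ) → (S j → Fin k))

noncomputable def tileCode (z : G → Λ × Fin (k₀ + 1)) (g : G) : Fin k :=
  open Classical in
  if h : ∃ p, IsCenter S (fun u => (z u).2) g p then
    Ψ h.choose.1 (fun t => (z (t * h.choose.2)).1) ⟨g * h.choose.2⁻¹, h.choose_spec.2⟩
  else 0

variable {S C Ψ}

theorem tileCode_eq {z : G → Λ × Fin (k₀ + 1)} (hz : HasUniqueCenters S fun u => (z u).2)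
    {g : G} {p : Fin k₀ × G} (hp : IsCenter S (fun u => (z u).2) g p) :
    tileCode S C Ψ z g = Ψ p.1 (fun t => (z (t * p.2)).1) ⟨g * p.2⁻¹, hp.2⟩ := by
  have h : ∃ p, IsCenter S (fun u => (z u).2) g p := ⟨p, hp⟩
  rw [tileCode, dif_pos h]
  obtain rfl := (hz g).unique hp h.choose_spec
  rfl

theorem tileCode_shift {z : G → Λ × Fin (k₀ + 1)} (hz : HasUniqueCenters S fun u => (z u).2)
    (g₀ g : G) : tileCode S C Ψ (fun u => z (u * g₀)) g = tileCode S C Ψ z (g * g₀) := by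
  obtain ⟨q, hq, -⟩ := hz.shift g₀ g
  rw [tileCode_eq (hz.shift g₀) hq, tileCode_eq hz (isCenter_shift_iff.1 hq)]
  congr 1
  · funext t
    simp only [mul_assoc]
  · ext
    simp [mul_assoc]

variable [DecidableEq G]

theorem tileCode_congr {z z' : G → Λ × Fin (k₀ + 1)} (hz : HasUniqueCenters S fun u => (z u).2)
    (hz' : HasUniqueCenters S fun u => (z' u).2) {g : G}
    (h : ∀ u ∈ tileWindow S C g, z u = z' u) : tileCode S C Ψ z g = tileCode S C Ψ z' g := by
  obtain ⟨p, hp, -⟩ := hz g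
  have hc := hp.mem_centerCandidates
  have hp' : IsCenter S (fun u => (z' u).2) g p :=
    (isCenter_congr fun c hc => congrArg Prod.snd (h c (mem_union_left _ hc))).1 hp
  rw [tileCode_eq hz hp, tileCode_eq hz' hp']
  congr 2 with t
  exact congrArg Prod.fst (h _ (mem_union_right _ (mem_biUnion.2
    ⟨p.2, hc, mem_biUnion.2 ⟨p.1, mem_univ _, mem_image_of_mem _ t.2⟩⟩)))

theorem continuousOn_tileCode [TopologicalSpace Λ] [DiscreteTopology Λ] :
    ContinuousOn (tileCode S C Ψ) {z | HasUniqueCenters S fun u => (z u).2} :=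
  continuousOn_pi.2 fun g => continuousOn_of_forall_mem_finset_eq (tileWindow S C g)
    fun _ hz _ hz' h => tileCode_congr hz hz' h

end TileCode

section Gluing

variable {G Λ : Type*} [Group G] [DecidableEq G]

def HasGluing (X : Set (G → Λ)) (D : Finset G) : Prop :=
  ∀ (T₁ T₂ : Finset G), Disjoint T₂ (D * T₁) →
    ∀ (A : ↥T₁ → Λ) (B : ↥T₂ → Λ),
      (∃ x ∈ X, ∀ t : ↥T₁, x t = A t) → (∃ x ∈ X, ∀ t : ↥T₂, x t = B t) →
      ∃ x ∈ X, (∀ t : ↥T₁, x t = A t) ∧ (∀ t : ↥T₂, x t = B t)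

theorem core_subset (D T : Finset G) : core D T ⊆ T :=
  filter_subset _ _

theorem mul_image_core_subset (D T : Finset G) (c : G) :
    D * (core D T).image (fun t => t * c) ⊆ T.image fun t => t * c := by
  intro a ha
  obtain ⟨d, hd, _, hb, rfl⟩ := mem_mul.1 ha
  obtain ⟨t, ht, rfl⟩ := mem_image.1 hb
  exact mem_image.2 ⟨d * t, (mem_filter.1 ht).2 d hd, mul_assoc _ _ _⟩

variable {X : Set (G → Λ)} {D : Finset G} {k₀ : ℕ} {S : Fin k₀ → Finset G}
  (𝒯 : Tiling G k₀ S) (B : ∀ p : Fin k₀ × G, core D (S p.1) → Λ)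

/-- Cores of distinct tiles are `D`-separated, so the blocks glue one tile at a time. -/
theorem exists_mem_forall_core_eq_of_finset (hXne : X.Nonempty)
    (hXinv : ∀ g : G, ∀ x ∈ X, (fun h => x (h * g)) ∈ X) (hglue : HasGluing X D)
    (hB : ∀ p, B p ∈ blocks X (core D (S p.1))) (P : Finset (Fin k₀ × G))
    (hP : ∀ p ∈ P, (S p.1).image (fun s => s * p.2) ∈ 𝒯.tiles) :
    ∃ x ∈ X, ∀ p ∈ P, ∀ t : core D (S p.1), x (t * p.2) = B p t := by
  induction P using Finset.induction_on with
  | empty =>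
    obtain ⟨x, hx⟩ := hXne
    exact ⟨x, hx, by simp⟩
  | insert p P hpP ih =>
    obtain ⟨x', hx', hx'P⟩ := ih fun q hq => hP q (mem_insert_of_mem hq)
    obtain ⟨x₁, hx₁, hx₁p⟩ := hB p
    have hdisj : Disjoint ((core D (S p.1)).image fun t => t * p.2)
        (D * P.biUnion fun q => (core D (S q.1)).image fun t => t * q.2) := by
      refine disjoint_left.2 fun a hap haP => ?_
      obtain ⟨d, hd, b, hb, rfl⟩ := mem_mul.1 haP
      obtain ⟨q, hq, hbq⟩ := mem_biUnion.1 hb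
      exact disjoint_left.1 (𝒯.disjoint_of_ne (hP p (mem_insert_self p P))
          (hP q (mem_insert_of_mem hq)) (ne_of_mem_of_not_mem hq hpP).symm)
        (image_subset_image (core_subset D _) hap)
        (mul_image_core_subset D _ _ (mul_mem_mul hd hbq))
    obtain ⟨x, hx, hxP, hxp⟩ := hglue _ _ hdisj (fun t => x' t) (fun t => x₁ (t * p.2⁻¹))
      ⟨x', hx', fun _ => rfl⟩ ⟨_, hXinv p.2⁻¹ x₁ hx₁, fun _ => rfl⟩
    refine ⟨x, hx, forall_mem_insert _ _ _ |>.2 ⟨fun t => ?_, fun q hq t => ?_⟩⟩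
    · simp [hxp ⟨_, mem_image_of_mem _ t.2⟩, ← hx₁p]
    · rw [hxP ⟨_, mem_biUnion.2 ⟨q, hq, mem_image_of_mem _ t.2⟩⟩]
      exact hx'P q hq t

theorem exists_mem_forall_core_eq [Finite Λ] [TopologicalSpace Λ] [DiscreteTopology Λ]
    (hXne : X.Nonempty) (hXcl : IsClosed X)
    (hXinv : ∀ g : G, ∀ x ∈ X, (fun h => x (h * g)) ∈ X) (hglue : HasGluing X D)
    (hB : ∀ p, B p ∈ blocks X (core D (S p.1))) :
    ∃ x ∈ X, ∀ p : Fin k₀ × G, (S p.1).image (fun s => s * p.2) ∈ 𝒯.tiles →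
      ∀ t : core D (S p.1), x (t * p.2) = B p t := by
  obtain ⟨x, hxX, hx⟩ := hXcl.isCompact.inter_iInter_nonempty
    (fun p : {p : Fin k₀ × G // (S p.1).image (fun s => s * p.2) ∈ 𝒯.tiles} =>
      {x : G → Λ | ∀ t : core D (S p.1.1), x (t * p.1.2) = B p.1 t})
    (fun p => by
      simp only [Set.ofPred_forall]
      exact isClosed_iInter fun t => isClosed_eq (continuous_apply _) continuous_const)
    (fun u => by
      obtain ⟨x, hx, hxu⟩ := exists_mem_forall_core_eq_of_finset 𝒯 B hXne hXinv hglue hB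
        (u.map (Function.Embedding.subtype _)) fun p hp => by
          obtain ⟨q, -, rfl⟩ := mem_map.1 hp
          exact q.2
      exact ⟨x, hx, Set.mem_iInter₂.2 fun p hp => hxu p.1 (mem_map_of_mem _ hp)⟩)
  exact ⟨x, hxX, fun p hp => Set.mem_iInter.1 hx ⟨p, hp⟩⟩

theorem exists_tileCode_eq [Finite Λ] [TopologicalSpace Λ] [DiscreteTopology Λ] {k : ℕ}
    [NeZero k] (hXne : X.Nonempty) (hXcl : IsClosed X)
    (hXinv : ∀ g : G, ∀ x ∈ X, (fun h => x (h * g)) ∈ X) (hglue : HasGluing X D)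
    {x₀ : G → Fin (k₀ + 1)} (hx₀ : encodes 𝒯 x₀)
    {Ψ : ∀ j, (core D (S j) → Λ) → (S j → Fin k)}
    (hΨ : ∀ j, Set.SurjOn (Ψ j) (blocks X (core D (S j))) Set.univ) (w : G → Fin k) :
    ∃ x ∈ X, tileCode S (fun j => core D (S j)) Ψ (fun g => (x g, x₀ g)) = w := by
  choose B hB hΨB using fun p : Fin k₀ × G => hΨ p.1 (Set.mem_univ fun s : S p.1 => w (s * p.2))
  obtain ⟨x, hx, hxB⟩ := exists_mem_forall_core_eq 𝒯 B hXne hXcl hXinv hglue hB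
  refine ⟨x, hx, funext fun g => ?_⟩
  obtain ⟨p, hp, -⟩ := 𝒯.hasUniqueCenters hx₀ g
  have hxp : (fun t : core D (S p.1) => x (t * p.2)) = B p := funext (hxB p ((hx₀ _ _).1 hp.1))
  rw [tileCode_eq (𝒯.hasUniqueCenters hx₀) hp]
  simp [hxp, hΨB p]

end Gluing

theorem stmt16_general {G Λ : Type*} [Group G] [DecidableEq G]
    [Fintype Λ] [TopologicalSpace Λ] [DiscreteTopology Λ]
    (l : ℕ) (hl : Fintype.card Λ = l)
    -- a Følner sequence for the countable amenable group G
    (F : ℕ → Finset G)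
    -- X is a subshift
    (X : Set (G → Λ)) (hXne : X.Nonempty) (hXcl : IsClosed X)
    (hXinv : ∀ (g : G), ∀ x ∈ X, (fun h => x (h * g)) ∈ X)
    -- entropy of X
    (hX : ℝ)
    (hXent : Filter.Tendsto (fun m => Real.log (blockCount X (F m)) / (F m).card)
      Filter.atTop (nhds hX))
    (k : ℕ) (hk : 2 ≤ k)
    -- gluing property with gluing distance D
    (D : Finset G)
    (hglue : ∀ (T₁ T₂ : Finset G), Disjoint T₂ (D * T₁) →
      ∀ (A : ↥T₁ → Λ) (B : ↥T₂ → Λ),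
        (∃ x ∈ X, ∀ t : ↥T₁, x t = A t) → (∃ x ∈ X, ∀ t : ↥T₂, x t = B t) →
        ∃ x ∈ X, (∀ t : ↥T₁, x t = A t) ∧ (∀ t : ↥T₂, x t = B t))
    -- the parameter γ
    (γ : ℝ)
    -- the tiling 𝒯₀ and the conditions on its shapes
    (k₀ : ℕ) (S : Fin k₀ → Finset G) (𝒯₀ : Tiling G k₀ S)
    (hshape1 : ∀ j, (((S j) \ core D (S j)).card : ℝ) <
      ((γ - 1) * Real.logb l k) * ((S j).card : ℝ))
    (hshape2 : ∀ j, ((blockCount X (S j) : ℝ)) > (k : ℝ) ^ (γ * ((S j).card : ℝ)))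
    -- the orbit-closure subshift Y = X_{𝒯₀} and its zero entropy
    (x₀ : G → Fin (k₀+1)) (hx₀ : encodes 𝒯₀ x₀)
    (Y : Set (G → Fin (k₀+1)))
    (hY : Y = closure {y | ∃ g : G, y = fun h => x₀ (h * g)})
    (hYent : Filter.Tendsto (fun m => Real.log (blockCount Y (F m)) / (F m).card)
      Filter.atTop (nhds 0)) :
    -- the product subshift X̃ has entropy hX and factors onto the full shift over k symbols
    Filter.Tendsto (fun m => Real.log (blockCount
        {z : G → Λ × Fin (k₀+1) | (fun g => (z g).1) ∈ X ∧ (fun g => (z g).2) ∈ Y}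
        (F m)) / (F m).card)
      Filter.atTop (nhds hX) ∧
    ∃ φ : (G → Λ × Fin (k₀+1)) → (G → Fin k),
      ContinuousOn φ
        {z : G → Λ × Fin (k₀+1) | (fun g => (z g).1) ∈ X ∧ (fun g => (z g).2) ∈ Y} ∧
      (∀ z ∈ {z : G → Λ × Fin (k₀+1) |
          (fun g => (z g).1) ∈ X ∧ (fun g => (z g).2) ∈ Y},
        ∀ g : G, φ (fun h => z (h * g)) = fun h => φ z (h * g)) ∧
      (∀ y : G → Fin k, ∃ z ∈ {z : G → Λ × Fin (k₀+1) |
          (fun g => (z g).1) ∈ X ∧ (fun g => (z g).2) ∈ Y}, φ z = y) := by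
  subst hl
  have hx₀Y : x₀ ∈ Y := hY ▸ subset_closure ⟨1, by simp⟩
  refine ⟨by simpa only [add_zero] using tendsto_log_blockCount_prod hXne ⟨x₀, hx₀Y⟩ hXent hYent,
    ?_⟩
  have : NeZero k := ⟨by omega⟩
  have hsurj (j : Fin k₀) : ∃ Ψj : (core D (S j) → Λ) → (S j → Fin k),
      Set.SurjOn Ψj (blocks X (core D (S j))) Set.univ :=
    exists_surjOn_univ_of_card_le <| by
      simpa [blockCount_eq_card_blocks] using (pow_card_lt_blockCount_of_subset X
        (core_subset D (S j)) (by omega) (hshape1 j) (hshape2 j)).le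
  choose Ψ hΨ using hsurj
  have hcenters (z : G → Λ × Fin (k₀ + 1)) (hz : (fun g => (z g).2) ∈ Y) :
      HasUniqueCenters S fun u => (z u).2 :=
    (𝒯₀.hasUniqueCenters hx₀).of_mem_closure_orbit (hY ▸ hz)
  refine ⟨tileCode S (fun j => core D (S j)) Ψ,
    continuousOn_tileCode.mono fun z hz => hcenters z hz.2,
    fun z hz g => funext fun h => tileCode_shift (hcenters z hz.2) g h, fun w => ?_⟩
  obtain ⟨x, hx, rfl⟩ := exists_tileCode_eq 𝒯₀ hXne hXcl hXinv hglue hx₀ hΨ w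
  exact ⟨_, ⟨hx, hx₀Y⟩, rfl⟩

theorem stmt16 {G Λ : Type*} [Group G] [Countable G] [DecidableEq G]
    [Fintype Λ] [TopologicalSpace Λ] [DiscreteTopology Λ]
    (l : ℕ) (hl : Fintype.card Λ = l)
    -- a Følner sequence for the countable amenable group G
    (F : ℕ → Finset G) (hFne : ∀ m, (F m).Nonempty)
    (hFolner : ∀ g : G, Filter.Tendsto
      (fun m => ((((F m).image (fun h => g * h)) ∆ (F m)).card : ℝ) / (F m).card)
      Filter.atTop (nhds 0))
    -- X is a subshift
    (X : Set (G → Λ)) (hXne : X.Nonempty) (hXcl : IsClosed X)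
    (hXinv : ∀ (g : G), ∀ x ∈ X, (fun h => x (h * g)) ∈ X)
    -- entropy of X
    (hX : ℝ)
    (hXent : Filter.Tendsto (fun m => Real.log (blockCount X (F m)) / (F m).card)
      Filter.atTop (nhds hX))
    (k : ℕ) (hk : 2 ≤ k) (hXk : hX > Real.log k)
    -- gluing property with gluing distance D
    (D : Finset G) (hD : (1 : G) ∈ D)
    (hglue : ∀ (T₁ T₂ : Finset G), Disjoint T₂ (D * T₁) →
      ∀ (A : ↥T₁ → Λ) (B : ↥T₂ → Λ),
        (∃ x ∈ X, ∀ t : ↥T₁, x t = A t) → (∃ x ∈ X, ∀ t : ↥T₂, x t = B t) →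
        ∃ x ∈ X, (∀ t : ↥T₁, x t = A t) ∧ (∀ t : ↥T₂, x t = B t))
    -- the parameter γ
    (γ : ℝ) (hγ1 : 1 < γ) (hγ2 : γ * Real.log k < hX)
    -- the tiling 𝒯₀ and the conditions on its shapes
    (k₀ : ℕ) (S : Fin k₀ → Finset G) (𝒯₀ : Tiling G k₀ S)
    (hshape1 : ∀ j, (((S j) \ core D (S j)).card : ℝ) <
      ((γ - 1) * Real.logb l k) * ((S j).card : ℝ))
    (hshape2 : ∀ j, ((blockCount X (S j) : ℝ)) > (k : ℝ) ^ (γ * ((S j).card : ℝ)))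
    -- the orbit-closure subshift Y = X_{𝒯₀} and its zero entropy
    (x₀ : G → Fin (k₀+1)) (hx₀ : encodes 𝒯₀ x₀)
    (Y : Set (G → Fin (k₀+1)))
    (hY : Y = closure {y | ∃ g : G, y = fun h => x₀ (h * g)})
    (hYent : Filter.Tendsto (fun m => Real.log (blockCount Y (F m)) / (F m).card)
      Filter.atTop (nhds 0)) :
    -- the product subshift X̃ has entropy hX and factors onto the full shift over k symbols
    Filter.Tendsto (fun m => Real.log (blockCount
        {z : G → Λ × Fin (k₀+1) | (fun g => (z g).1) ∈ X ∧ (fun g => (z g).2) ∈ Y}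
        (F m)) / (F m).card)
      Filter.atTop (nhds hX) ∧
    ∃ φ : (G → Λ × Fin (k₀+1)) → (G → Fin k),
      ContinuousOn φ
        {z : G → Λ × Fin (k₀+1) | (fun g => (z g).1) ∈ X ∧ (fun g => (z g).2) ∈ Y} ∧
      (∀ z ∈ {z : G → Λ × Fin (k₀+1) |
          (fun g => (z g).1) ∈ X ∧ (fun g => (z g).2) ∈ Y},
        ∀ g : G, φ (fun h => z (h * g)) = fun h => φ z (h * g)) ∧
      (∀ y : G → Fin k, ∃ z ∈ {z : G → Λ × Fin (k₀+1) |
          (fun g => (z g).1) ∈ X ∧ (fun g => (z g).2) ∈ Y}, φ z = y) :=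
  stmt16_general l hl F X hXne hXcl hXinv hX hXent k hk D hglue γ k₀ S 𝒯₀ hshape1 hshape2 x₀ hx₀ Y
    hY hYent
end
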